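/- arXiv:2007.09345 — 5 statements merged into one kernel-verified Lean document; each statement's English description precedes it below -/
import Mathlib

section
/- For a symmetric dissimilarity map D on {a,b,c,d} with zero diagonal, the Q-criterion Q(x,y) = 2·D(x,y) − Σ_z D(x,z) − Σ_z D(y,z) always attains its minimum over unordered pairs of distinct elements in at least two distinct pairs. -/
/-!
Expanding the two row sums, `Q x y` is minus the total dissimilarity between `{x, y}` and its
complement `{z, w}`; this is symmetric in the two pairs, so `Q x y = Q z w`. Hence the pair
complementary to a minimizer of `Q` is a second minimizer.
-/

open Finset

variable {α : Type*} [Fintype α] [DecidableEq α]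

lemma exists_pair_disjoint_union_eq_univ (hα : Fintype.card α = 4) {x y : α} (hxy : x ≠ y) :
    ∃ z w : α, z ≠ w ∧ Disjoint ({x, y} : Finset α) {z, w} ∧
      ({x, y} : Finset α) ∪ {z, w} = univ := by
  have hcard : (univ \ {x, y} : Finset α).card = 2 := by
    rw [card_sdiff_of_subset (subset_univ _), card_univ, hα, card_pair hxy]
  obtain ⟨z, w, hzw, hcompl⟩ := card_eq_two.mp hcard
  refine ⟨z, w, hzw, hcompl ▸ disjoint_sdiff, ?_⟩
  rw [← hcompl, union_sdiff_of_subset (subset_univ _)]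

lemma sub_rowSum_sub_rowSum_eq_of_pairs {D : α → α → ℝ}
    (hsym : ∀ x y, D x y = D y x) (hdiag : ∀ x, D x x = 0) {x y z w : α}
    (hxy : x ≠ y) (hzw : z ≠ w) (hdisj : Disjoint ({x, y} : Finset α) {z, w})
    (hunion : ({x, y} : Finset α) ∪ {z, w} = univ) :
    2 * D x y - ∑ v, D x v - ∑ v, D y v = 2 * D z w - ∑ v, D z v - ∑ v, D w v := by
  have hrow : ∀ u, ∑ v, D u v = D u x + D u y + (D u z + D u w) := fun u => by
    rw [← hunion, sum_union hdisj, sum_pair hxy, sum_pair hzw]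
  simp only [hrow, hdiag]
  linarith [hsym x y, hsym z w, hsym x z, hsym x w, hsym y z, hsym y w]

theorem exists_two_pairs_isMin_of_card_eq_four (hα : Fintype.card α = 4) (D : α → α → ℝ)
    (hsym : ∀ x y, D x y = D y x) (hdiag : ∀ x, D x x = 0)
    (Q : α → α → ℝ)
    (hQ : ∀ x y, Q x y = 2 * D x y - (∑ z, D x z) - (∑ z, D y z)) :
    ∃ i j k l : α, i ≠ j ∧ k ≠ l ∧ ({i, j} : Finset α) ≠ {k, l} ∧
      (∀ p q : α, p ≠ q → Q i j ≤ Q p q) ∧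
      (∀ p q : α, p ≠ q → Q k l ≤ Q p q) := by
  obtain ⟨a, b, hab⟩ := Fintype.exists_pair_of_one_lt_card (by omega : 1 < Fintype.card α)
  have hne : (univ : Finset α).offDiag.Nonempty := ⟨(a, b), by simpa using hab⟩
  obtain ⟨⟨i, j⟩, hij, hmin⟩ := exists_min_image _ (fun pq => Q pq.1 pq.2) hne
  simp only [mem_offDiag, mem_univ, true_and] at hij
  have hmin' : ∀ p q : α, p ≠ q → Q i j ≤ Q p q := fun p q hpq =>
    hmin (p, q) (by simpa using hpq)
  obtain ⟨k, l, hkl, hdisj, hunion⟩ := exists_pair_disjoint_union_eq_univ hα hij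
  have hQeq : Q k l = Q i j := by
    rw [hQ, hQ, sub_rowSum_sub_rowSum_eq_of_pairs hsym hdiag hij hkl hdisj hunion]
  refine ⟨i, j, k, l, hij, hkl, fun heq => ?_, hmin', hQeq ▸ hmin'⟩
  rw [← heq, disjoint_self_iff_empty] at hdisj
  simp at hdisj

theorem stmt1 (D : Fin 4 → Fin 4 → ℝ)
    (hsym : ∀ x y, D x y = D y x) (hdiag : ∀ x, D x x = 0)
    (Q : Fin 4 → Fin 4 → ℝ)
    (hQ : ∀ x y, Q x y = 2 * D x y - (∑ z, D x z) - (∑ z, D y z)) :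
    ∃ i j k l : Fin 4, i ≠ j ∧ k ≠ l ∧ ({i, j} : Finset (Fin 4)) ≠ {k, l} ∧
      (∀ p q : Fin 4, p ≠ q → Q i j ≤ Q p q) ∧
      (∀ p q : Fin 4, p ≠ q → Q k l ≤ Q p q) :=
  exists_two_pairs_isMin_of_card_eq_four (Fintype.card_fin 4) D hsym hdiag Q hQ
end

section
/- Define the Motzkin triangle by M(0,0) = 1, M(k,j) = 0 for j < 0 or j > k, and M(k+1,j) = M(k,j−1) + M(k,j) + M(k,j+1). Then for all k ≥ 0 and 0 ≤ j ≤ k, M(k,j) = Σ_{i=0}^{k} C(k,i) · [C(k−i, (k+j−i)/2) − C(k−i, (k+j−i+2)/2)], where a term is 0 when the indicated division is not exact. -/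
/-!
Deleting the flat steps of a Motzkin path of length `k` that has `i` of them leaves a walk of
`n = k - i` steps `±1` from height `0` to height `j` that stays weakly above the axis. By the
reflection principle there are `C(n, (n+j)/2) - C(n, (n+j)/2 + 1)` such walks, and there are
`C(k, i)` ways to place the flat steps. Rather than counting paths, the proof checks recurrences:
by Pascal's rule the ballot numbers satisfy `B(n+1, j+1) = B(n, j) + B(n, j+2)` and
`B(n+1, 0) = B(n, 1)`, and a second use of Pascal's rule turns this into the Motzkin recurrence
for their binomial transform, which therefore agrees with `M`.
-/

open Finset

def ballot (n j : ℕ) : ℤ :=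
  if (n + j) % 2 = 0 then (n.choose ((n + j) / 2) : ℤ) - n.choose ((n + j + 2) / 2) else 0

theorem ballot_eq_zero_of_lt {n j : ℕ} (h : n < j) : ballot n j = 0 := by
  unfold ballot
  split_ifs
  · rw [Nat.choose_eq_zero_of_lt (by omega), Nat.choose_eq_zero_of_lt (by omega), sub_self]
  · rfl

theorem ballot_succ_succ (n j : ℕ) : ballot (n + 1) (j + 1) = ballot n j + ballot n (j + 2) := by
  obtain ⟨m, hm⟩ : ∃ m, m = n + j := ⟨_, rfl⟩
  simp only [ballot, show n + 1 + (j + 1) = m + 2 by omega, show n + (j + 2) = m + 2 by omega,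
    ← hm, Nat.add_mod_right]
  split_ifs
  · rw [show (m + 2) / 2 = m / 2 + 1 by omega, show (m + 2 + 2) / 2 = m / 2 + 1 + 1 by omega,
      Nat.choose_succ_succ, Nat.choose_succ_succ]
    push_cast
    ring
  · simp

theorem ballot_succ_zero (n : ℕ) : ballot (n + 1) 0 = ballot n 1 := by
  unfold ballot
  split_ifs with h
  · obtain ⟨t, rfl⟩ : ∃ t, n = 2 * t + 1 := ⟨n / 2, by omega⟩
    have hsymm : (2 * t + 1).choose t = (2 * t + 1).choose (t + 1) := by
      rw [← Nat.choose_symm (by omega : t ≤ 2 * t + 1), show 2 * t + 1 - t = t + 1 by omega]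
    rw [show (2 * t + 1 + 1 + 0) / 2 = t + 1 by omega,
      show (2 * t + 1 + 1 + 0 + 2) / 2 = t + 1 + 1 by omega,
      Nat.choose_succ_succ (2 * t + 1) t, Nat.choose_succ_succ (2 * t + 1) (t + 1), hsymm]
    push_cast
    ring
  · rfl

theorem sum_range_succ_choose_mul {R : Type*} [CommSemiring R] (f : ℕ → R) (k : ℕ) :
    ∑ i ∈ range (k + 2), ((k + 1).choose i : R) * f (k + 1 - i) =
      ∑ i ∈ range (k + 1), (k.choose i : R) * (f (k + 1 - i) + f (k - i)) := by
  simp only [sum_choose_succ_mul (fun _ m => f m) k, mul_add, sum_add_distrib]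

def motzkinSum (k j : ℕ) : ℤ :=
  ∑ i ∈ range (k + 1), (k.choose i : ℤ) * ballot (k - i) j

theorem motzkinSum_zero_zero : motzkinSum 0 0 = 1 := by
  simp [motzkinSum, ballot]

theorem motzkinSum_eq_zero_of_lt {k j : ℕ} (h : k < j) : motzkinSum k j = 0 :=
  sum_eq_zero fun i _ => by rw [ballot_eq_zero_of_lt (by omega), mul_zero]

theorem motzkinSum_succ (k j : ℕ) :
    motzkinSum (k + 1) j =
      ∑ i ∈ range (k + 1), (k.choose i : ℤ) * ballot (k - i + 1) j + motzkinSum k j := by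
  rw [motzkinSum, sum_range_succ_choose_mul (ballot · j), motzkinSum, ← sum_add_distrib]
  refine sum_congr rfl fun i hi => ?_
  rw [show k + 1 - i = k - i + 1 by have := mem_range.1 hi; omega, mul_add]

theorem motzkinSum_succ_zero (k : ℕ) : motzkinSum (k + 1) 0 = motzkinSum k 0 + motzkinSum k 1 := by
  simp only [motzkinSum_succ, ballot_succ_zero]
  simp only [motzkinSum]
  ring

theorem motzkinSum_succ_succ (k j : ℕ) :
    motzkinSum (k + 1) (j + 1) = motzkinSum k j + motzkinSum k (j + 1) + motzkinSum k (j + 2) := by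
  simp only [motzkinSum_succ, ballot_succ_succ, mul_add, sum_add_distrib]
  simp only [motzkinSum]
  ring

theorem eq_motzkinSum (M : ℕ → ℕ → ℕ) (h00 : M 0 0 = 1) (hhigh : ∀ k j, k < j → M k j = 0)
    (hrec0 : ∀ k, M (k + 1) 0 = M k 0 + M k 1)
    (hrec : ∀ k j, M (k + 1) (j + 1) = M k j + M k (j + 1) + M k (j + 2)) (k j : ℕ) :
    (M k j : ℤ) = motzkinSum k j := by
  induction k generalizing j with
  | zero =>
    cases j with
    | zero => simp [h00, motzkinSum_zero_zero]
    | succ j => simp [hhigh 0 (j + 1) (by omega), motzkinSum_eq_zero_of_lt]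
  | succ k ih =>
    cases j with
    | zero => push_cast [hrec0, motzkinSum_succ_zero, ih]; rfl
    | succ j => push_cast [hrec, motzkinSum_succ_succ, ih]; rfl

theorem stmt6 (M : ℕ → ℕ → ℕ)
    (h00 : M 0 0 = 1)
    (hhigh : ∀ k j, k < j → M k j = 0)
    (hrec0 : ∀ k, M (k + 1) 0 = M k 0 + M k 1)
    (hrec : ∀ k j, M (k + 1) (j + 1) = M k j + M k (j + 1) + M k (j + 2)) :
    ∀ k j, j ≤ k → (M k j : ℤ) =
      ∑ i ∈ Finset.range (k + 1),
        if (k + j - i) % 2 = 0 then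
          (Nat.choose k i : ℤ) *
            ((Nat.choose (k - i) ((k + j - i) / 2) : ℤ) -
              (Nat.choose (k - i) ((k + j - i + 2) / 2) : ℤ))
        else 0 := by
  intro k j _
  rw [eq_motzkinSum M h00 hhigh hrec0 hrec, motzkinSum]
  refine sum_congr rfl fun i hi => ?_
  rw [ballot, show k - i + j = k + j - i by have := mem_range.1 hi; omega, mul_ite, mul_zero]
end

section
/- Let M_k denote the k-th Motzkin number and C_k the k-th Catalan number. Then for all k ≥ 0, C_{k+1} = Σ_{i=0}^{k} C(k,i)·M_i. -/
/-!
Let `B k = ∑ i, (k choose i) M_i` be the binomial transform of the Motzkin numbers. Creative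
telescoping turns the three-term Motzkin recurrence into the first-order recurrence
`(k + 3) B (k + 1) = (4k + 6) B k`, which `catalan (k + 1)` satisfies as well (via the central
binomial coefficients); both sequences start at `1`.
-/

open Finset

theorem succ_succ_mul_catalan_succ (n : ℕ) :
    (n + 2) * catalan (n + 1) = 2 * (2 * n + 1) * catalan n := by
  apply Nat.eq_of_mul_eq_mul_left (Nat.succ_pos n)
  calc (n + 1) * ((n + 2) * catalan (n + 1))
      = (n + 1) * Nat.centralBinom (n + 1) := by rw [← succ_mul_catalan_eq_centralBinom]
    _ = 2 * (2 * n + 1) * Nat.centralBinom n := Nat.succ_mul_centralBinom_succ n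
    _ = (n + 1) * (2 * (2 * n + 1) * catalan n) := by
      rw [← succ_mul_catalan_eq_centralBinom]; ring

section BinomialTransform

variable {R : Type*}

def binomialTransform [CommSemiring R] (M : ℕ → R) (k : ℕ) : R :=
  ∑ i ∈ range (k + 1), (k.choose i : R) * M i

variable [CommRing R]

theorem cast_succ_sub_mul_choose_succ (n k : ℕ) :
    ((n : R) + 1 - k) * ((n + 1).choose k : R) = ((n : R) + 1) * (n.choose k : R) := by
  rcases le_or_gt k (n + 1) with h | h
  · have h' := congrArg (Nat.cast (R := R)) (Nat.choose_mul_succ_eq n k)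
    push_cast [Nat.cast_sub h] at h'
    linear_combination -h'
  · simp [Nat.choose_eq_zero_of_lt h, Nat.choose_eq_zero_of_lt (by omega : n < k)]

theorem cast_succ_mul_choose_succ (n k : ℕ) :
    ((k : R) + 1) * (n.choose (k + 1) : R) = ((n : R) - k) * (n.choose k : R) := by
  rcases le_or_gt k n with h | h
  · have h' := congrArg (Nat.cast (R := R)) (Nat.choose_succ_right_eq n k)
    push_cast [Nat.cast_sub h] at h'
    linear_combination h'
  · simp [Nat.choose_eq_zero_of_lt h, Nat.choose_eq_zero_of_lt (by omega : n < k + 1)]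

/-- The certificate produced by Zeilberger's algorithm for the summand `(k choose i) M_i`. -/
def motzkinCertificate (M : ℕ → R) (k i : ℕ) : R :=
  -((i : R) + 2) * ((k + 1).choose i : R) * M i
    + (3 * (i : R) + 5) * (k.choose i : R) * M i
    - ((i : R) + 3) * (k.choose i : R) * M (i + 1)

variable {M : ℕ → R} (hM : ∀ i : ℕ,
  ((i : R) + 4) * M (i + 2) = (2 * (i : R) + 5) * M (i + 1) + 3 * ((i : R) + 1) * M i)
include hM

theorem motzkinCertificate_sub (k i : ℕ) :
    motzkinCertificate M k (i + 1) - motzkinCertificate M k i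
      = ((k : R) + 3) * ((k + 1).choose i : R) * M i
        - (4 * (k : R) + 6) * (k.choose i : R) * M i := by
  have hPascal : ((k + 1).choose (i + 1) : R) = (k.choose (i + 1) : R) + (k.choose i : R) := by
    rw [Nat.choose_succ_succ, Nat.cast_add, add_comm]
  simp only [motzkinCertificate]
  push_cast
  linear_combination -((k.choose (i + 1) : R)) * hM i - ((i : R) + 3) * M (i + 1) * hPascal
    - M i * cast_succ_sub_mul_choose_succ (R := R) k i
    - 3 * M i * cast_succ_mul_choose_succ (R := R) k i

theorem binomialTransform_succ_of_motzkin_rec (h01 : M 1 = M 0) (k : ℕ) :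
    ((k : R) + 3) * binomialTransform M (k + 1) = (4 * (k : R) + 6) * binomialTransform M k := by
  have hstart : motzkinCertificate M k 0 = 0 := by
    simp only [motzkinCertificate, Nat.cast_zero, Nat.choose_zero_right, Nat.cast_one, zero_add,
      h01]
    ring
  have hend : motzkinCertificate M k (k + 2) = 0 := by
    simp [motzkinCertificate, Nat.choose_eq_zero_of_lt]
  have hextend : binomialTransform M k = ∑ i ∈ range (k + 2), (k.choose i : R) * M i := by
    rw [Finset.sum_range_succ _ (k + 1), Nat.choose_eq_zero_of_lt (Nat.lt_succ_self k),
      Nat.cast_zero, zero_mul, add_zero, binomialTransform]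
  have htelescope := Finset.sum_range_sub (motzkinCertificate M k) (k + 2)
  rw [hend, hstart, sub_zero, Finset.sum_congr rfl fun i _ => motzkinCertificate_sub hM k i,
    Finset.sum_sub_distrib] at htelescope
  rw [hextend, binomialTransform, Finset.mul_sum, Finset.mul_sum]
  simp only [← mul_assoc]
  linear_combination htelescope

end BinomialTransform

theorem stmt8 (M : ℕ → ℕ)
    (h0 : M 0 = 1) (h1 : M 1 = 1)
    (hrec : ∀ i, 2 ≤ i → (i + 2) * M i = (2 * i + 1) * M (i - 1) + 3 * (i - 1) * M (i - 2)) :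
    ∀ k, catalan (k + 1) = ∑ i ∈ Finset.range (k + 1), Nat.choose k i * M i := by
  have hshift (i : ℕ) :
      (i + 4) * M (i + 2) = (2 * i + 5) * M (i + 1) + 3 * (i + 1) * M i := by
    have h := hrec (i + 2) (by omega)
    rw [show i + 2 - 1 = i + 1 by omega, Nat.add_sub_cancel] at h
    linarith
  have hB (k : ℕ) :
      (k + 3) * binomialTransform M (k + 1) = (4 * k + 6) * binomialTransform M k := by
    have h := binomialTransform_succ_of_motzkin_rec (M := fun i => (M i : ℤ))
      (fun i => by exact_mod_cast hshift i) (by simp [h0, h1]) k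
    simp only [binomialTransform] at h ⊢
    exact_mod_cast h
  intro k
  change catalan (k + 1) = binomialTransform M k
  induction k with
  | zero => simp [binomialTransform, h0]
  | succ k ih =>
    apply Nat.eq_of_mul_eq_mul_left (show 0 < k + 3 by omega)
    rw [hB, ← ih, succ_succ_mul_catalan_succ]
    ring
end

section
/- Define the weighted Motzkin triangle for fixed n ≥ 4 by W(0,0) = C(n,2), W(k,j) = 0 for j < 0 or j > k, and W(k+1,j) = a(k,j−1)·W(k,j−1) + c(k,j)·W(k,j) + b(k,j+1)·W(k,j+1), where a(s,j) = C(n−s−j−2, 2), b(s,j) = C(j+1, 2), c(s,j) = (n−s−j−2)·(j+1). Then W(n−4,0) + W(n−4,1) + W(n−4,2) = C(n,2)·C(n−1,2)·…·C(4,2). -/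
/-!
Write `x = n - s - j - 2` and `y = j + 1`. Since `C(x, 2) + x y + C(y, 2) = C(x + y, 2)`,
the three weights leaving the point `(s, j)` add up to `C(n - s - 1, 2)` independently of the
level `j`. Hence every step of the recurrence multiplies the row sum `∑ⱼ W(s, j)` by `C(n - s - 1, 2)`,
and the row sum of row `k` is `C(n, 2) C(n - 1, 2) ⋯ C(n - k, 2)`. Moreover `W(s, j) = 0` once
`s + j > n - 2`, so row `n - 4` is supported on the levels `0, 1, 2`.
-/

open Finset

theorem Nat.add_choose_two (x y : ℕ) :
    (x + y).choose 2 = x.choose 2 + x * y + y.choose 2 := by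
  induction y with
  | zero => simp
  | succ y ih =>
    rw [← add_assoc, Nat.choose_succ_succ', ih, Nat.choose_succ_succ' y, Nat.choose_one_right,
      Nat.choose_one_right]
    ring

theorem Finset.prod_range_succ_sub_eq_prod_Icc {M : Type*} [CommMonoid M] (f : ℕ → M)
    {n k : ℕ} (hk : k ≤ n) :
    ∏ i ∈ range (k + 1), f (n - i) = ∏ m ∈ Icc (n - k) n, f m := by
  apply prod_nbij' (fun i => n - i) (fun m => n - m) <;> intro i hi <;> simp_all <;> omega

theorem sum_range_motzkin_step (a b c w v : ℕ → ℕ) (N : ℕ) (hb : b 0 = 0)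
    (hw : ∀ j, N ≤ j → w j = 0)
    (hv0 : v 0 = c 0 * w 0 + b 1 * w 1)
    (hv : ∀ j, v (j + 1) = a j * w j + c (j + 1) * w (j + 1) + b (j + 2) * w (j + 2)) :
    ∑ j ∈ range (N + 1), v j = ∑ j ∈ range (N + 1), (a j + c j + b j) * w j := by
  have ha_shift : ∑ j ∈ range (N + 1), a j * w j = ∑ j ∈ range N, a j * w j := by
    rw [sum_range_succ, hw N le_rfl, mul_zero, add_zero]
  have hb_shift : ∑ j ∈ range (N + 1), b j * w j =
      ∑ j ∈ range N, b (j + 2) * w (j + 2) + b 1 * w 1 := by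
    rw [← add_zero (∑ j ∈ range (N + 1), b j * w j), ← mul_zero (b (N + 1)),
      ← hw (N + 1) N.le_succ, ← sum_range_succ (fun j => b j * w j), sum_range_succ',
      sum_range_succ', hb, zero_mul, add_zero]
  rw [sum_range_succ' v, hv0]
  simp only [hv, add_mul, sum_add_distrib, ha_shift, sum_range_succ' (fun j => c j * w j),
    hb_shift]
  ring

namespace AgglomeratedMotzkin

variable {n : ℕ} {a b c W : ℕ → ℕ → ℕ}

theorem weight_sum (ha : ∀ s j, a s j = (n - s - j - 2).choose 2)
    (hb : ∀ s j, b s j = (j + 1).choose 2) (hc : ∀ s j, c s j = (n - s - j - 2) * (j + 1))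
    {s j : ℕ} (h : s + j + 2 ≤ n) :
    a s j + c s j + b s j = (n - s - 1).choose 2 := by
  rw [ha, hb, hc, show n - s - 1 = n - s - j - 2 + (j + 1) by omega,
    Nat.add_choose_two (n - s - j - 2)]

theorem eq_zero_of_lt_add (ha : ∀ s j, a s j = (n - s - j - 2).choose 2)
    (hc : ∀ s j, c s j = (n - s - j - 2) * (j + 1))
    (hWhigh : ∀ k j, k < j → W k j = 0)
    (hrec0 : ∀ k, W (k + 1) 0 = c k 0 * W k 0 + b k 1 * W k 1)
    (hrec : ∀ k j, W (k + 1) (j + 1) =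
      a k j * W k j + c k (j + 1) * W k (j + 1) + b k (j + 2) * W k (j + 2))
    (k j : ℕ) (h : n - 2 < k + j) : W k j = 0 := by
  induction k generalizing j with
  | zero => exact hWhigh 0 j (by omega)
  | succ k ih =>
    rcases j with _ | j
    · rw [hrec0, hc, ih 1 (by omega), show n - k - 0 - 2 = 0 by omega]
      simp
    · rw [hrec, ha, hc, ih (j + 2) (by omega), show n - k - (j + 1) - 2 = 0 by omega,
        Nat.choose_eq_zero_of_lt (show n - k - j - 2 < 2 by omega)]
      simp

theorem sum_range_succ_row (hn : 2 ≤ n) (ha : ∀ s j, a s j = (n - s - j - 2).choose 2)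
    (hb : ∀ s j, b s j = (j + 1).choose 2) (hc : ∀ s j, c s j = (n - s - j - 2) * (j + 1))
    (hrec0 : ∀ k, W (k + 1) 0 = c k 0 * W k 0 + b k 1 * W k 1)
    (hrec : ∀ k j, W (k + 1) (j + 1) =
      a k j * W k j + c k (j + 1) * W k (j + 1) + b k (j + 2) * W k (j + 2))
    {k : ℕ} (hzero : ∀ j, n - 2 < k + j → W k j = 0) :
    ∑ j ∈ range (n + 1), W (k + 1) j = (n - k - 1).choose 2 * ∑ j ∈ range (n + 1), W k j := by
  rw [sum_range_motzkin_step (a k) (b k) (c k) (W k) (W (k + 1)) n (by simp [hb])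
    (fun j _ => hzero j (by omega)) (hrec0 k) (hrec k), mul_sum]
  refine sum_congr rfl fun j _ => ?_
  rcases le_or_gt (k + j + 2) n with h | h
  · rw [weight_sum ha hb hc h, mul_comm]
  · rw [hzero j (by omega), mul_zero, mul_zero]

theorem sum_range_row (hn : 2 ≤ n) (ha : ∀ s j, a s j = (n - s - j - 2).choose 2)
    (hb : ∀ s j, b s j = (j + 1).choose 2) (hc : ∀ s j, c s j = (n - s - j - 2) * (j + 1))
    (hW0 : W 0 0 = n.choose 2) (hWhigh : ∀ k j, k < j → W k j = 0)
    (hrec0 : ∀ k, W (k + 1) 0 = c k 0 * W k 0 + b k 1 * W k 1)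
    (hrec : ∀ k j, W (k + 1) (j + 1) =
      a k j * W k j + c k (j + 1) * W k (j + 1) + b k (j + 2) * W k (j + 2)) (k : ℕ) :
    ∑ j ∈ range (n + 1), W k j = ∏ i ∈ range (k + 1), (n - i).choose 2 := by
  induction k with
  | zero =>
    rw [sum_eq_single_of_mem 0 (by simp) fun j _ hj => hWhigh 0 j (by omega), hW0]
    simp
  | succ k ih =>
    rw [sum_range_succ_row hn ha hb hc hrec0 hrec (eq_zero_of_lt_add ha hc hWhigh hrec0 hrec k),
      ih, prod_range_succ _ (k + 1), Nat.sub_sub, mul_comm]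

end AgglomeratedMotzkin

theorem stmt10 (n : ℕ) (hn : 4 ≤ n)
    (a b c : ℕ → ℕ → ℕ)
    (ha : ∀ s j, a s j = Nat.choose (n - s - j - 2) 2)
    (hb : ∀ s j, b s j = Nat.choose (j + 1) 2)
    (hc : ∀ s j, c s j = (n - s - j - 2) * (j + 1))
    (W : ℕ → ℕ → ℕ)
    (hW0 : W 0 0 = Nat.choose n 2)
    (hWhigh : ∀ k j, k < j → W k j = 0)
    (hrec0 : ∀ k, W (k + 1) 0 = c k 0 * W k 0 + b k 1 * W k 1)
    (hrec : ∀ k j, W (k + 1) (j + 1) =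
      a k j * W k j + c k (j + 1) * W k (j + 1) + b k (j + 2) * W k (j + 2)) :
    W (n - 4) 0 + W (n - 4) 1 + W (n - 4) 2 = ∏ m ∈ Finset.Icc 4 n, Nat.choose m 2 := by
  have hzero := AgglomeratedMotzkin.eq_zero_of_lt_add ha hc hWhigh hrec0 hrec (n - 4)
  have hrow := AgglomeratedMotzkin.sum_range_row (by omega) ha hb hc hW0 hWhigh hrec0 hrec (n - 4)
  rw [prod_range_succ_sub_eq_prod_Icc (·.choose 2) (Nat.sub_le n 4),
    show n - (n - 4) = 4 by omega] at hrow
  rw [← hrow, ← sum_subset (range_subset_range.mpr (show 3 ≤ n + 1 by omega))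
    fun j _ hj => hzero j (by simp only [mem_range, not_lt] at hj; omega)]
  simp [sum_range_succ]
end

section
/- Let D be an additive dissimilarity map on four leaves {a,b,c,d} realized by an unrooted binary tree with cherries {a,b} and {c,d} and nonnegative edge weights, with internal edge weight w > 0. Then Q(a,b) = Q(c,d) < Q(x,y) for every other pair {x,y}, where Q(x,y) = 2·D(x,y) − Σ_z D(x,z) − Σ_z D(y,z). -/
/-! On the quartet tree with cherries `{0, 1}` and `{2, 3}`, every row sum of the additive
metric counts the internal edge twice, so `Q(x, y) = 2 D(x, y) - r_x - r_y` equals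
`-2 L` for the total tree length `L` whenever the path from `x` to `y` crosses the internal
edge, while for a cherry, whose path avoids it, `Q = -2 L - 2 w`. -/

/-- The Neighbor-Joining `Q`-criterion of a dissimilarity map `D`. -/
def njCriterion {ι : Type*} [Fintype ι] (D : ι → ι → ℝ) (x y : ι) : ℝ :=
  2 * D x y - ∑ z, D x z - ∑ z, D y z

/-- Leaves `0, 1, 2, 3` stand for `a, b, c, d`; the internal edge `w` separates `{0, 1}` from
`{2, 3}`. -/
def quartetDist (pa pb pc pd w : ℝ) : Fin 4 → Fin 4 → ℝ :=
  ![![0, pa + pb, pa + w + pc, pa + w + pd],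
    ![pa + pb, 0, pb + w + pc, pb + w + pd],
    ![pa + w + pc, pb + w + pc, 0, pc + pd],
    ![pa + w + pd, pb + w + pd, pc + pd, 0]]

theorem eq_quartetDist {pa pb pc pd w : ℝ} {D : Fin 4 → Fin 4 → ℝ}
    (hsym : ∀ x y, D x y = D y x) (hdiag : ∀ x, D x x = 0)
    (hab : D 0 1 = pa + pb) (hcd : D 2 3 = pc + pd)
    (hac : D 0 2 = pa + w + pc) (had : D 0 3 = pa + w + pd)
    (hbc : D 1 2 = pb + w + pc) (hbd : D 1 3 = pb + w + pd) :
    D = quartetDist pa pb pc pd w := by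
  funext x y
  fin_cases x <;> fin_cases y <;>
    simp [quartetDist, hdiag, hab, hcd, hac, had, hbc, hbd, hsym 1 0, hsym 2 0, hsym 3 0,
      hsym 2 1, hsym 3 1, hsym 3 2]

section njCriterion_quartetDist

variable (pa pb pc pd w : ℝ)

theorem njCriterion_quartetDist_cherry :
    njCriterion (quartetDist pa pb pc pd w) 0 1 = -2 * (pa + pb + pc + pd + w) - 2 * w ∧
    njCriterion (quartetDist pa pb pc pd w) 2 3 = -2 * (pa + pb + pc + pd + w) - 2 * w := by
  constructor <;> simp [njCriterion, quartetDist, Fin.sum_univ_four] <;> ring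

theorem njCriterion_quartetDist_of_not_cherry {x y : Fin 4} (hxy : x ≠ y)
    (h01 : ({x, y} : Finset (Fin 4)) ≠ {0, 1}) (h23 : ({x, y} : Finset (Fin 4)) ≠ {2, 3}) :
    njCriterion (quartetDist pa pb pc pd w) x y = -2 * (pa + pb + pc + pd + w) := by
  fin_cases x <;> fin_cases y <;> first
    | exact absurd rfl hxy
    | exact absurd (by decide) h01
    | exact absurd (by decide) h23
    | (simp [njCriterion, quartetDist, Fin.sum_univ_four]; ring)

end njCriterion_quartetDist

theorem stmt18_general (pa pb pc pd w : ℝ)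
    (hw : 0 < w)
    (D : Fin 4 → Fin 4 → ℝ)
    (hsym : ∀ x y, D x y = D y x) (hdiag : ∀ x, D x x = 0)
    (hab : D 0 1 = pa + pb) (hcd : D 2 3 = pc + pd)
    (hac : D 0 2 = pa + w + pc) (had : D 0 3 = pa + w + pd)
    (hbc : D 1 2 = pb + w + pc) (hbd : D 1 3 = pb + w + pd)
    (Q : Fin 4 → Fin 4 → ℝ)
    (hQ : ∀ x y, Q x y = 2 * D x y - (∑ z, D x z) - (∑ z, D y z)) :
    Q 0 1 = Q 2 3 ∧
    ∀ x y : Fin 4, x ≠ y →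
      ({x, y} : Finset (Fin 4)) ≠ {0, 1} → ({x, y} : Finset (Fin 4)) ≠ {2, 3} →
      Q 0 1 < Q x y := by
  have hQD : Q = njCriterion (quartetDist pa pb pc pd w) := by
    rw [← eq_quartetDist hsym hdiag hab hcd hac had hbc hbd]
    funext x y
    exact hQ x y
  obtain ⟨h01, h23⟩ := njCriterion_quartetDist_cherry pa pb pc pd w
  subst hQD
  refine ⟨h01.trans h23.symm, fun x y hxy hx01 hx23 => ?_⟩
  rw [h01, njCriterion_quartetDist_of_not_cherry pa pb pc pd w hxy hx01 hx23]
  linarith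

theorem stmt18 (pa pb pc pd w : ℝ)
    (hpa : 0 ≤ pa) (hpb : 0 ≤ pb) (hpc : 0 ≤ pc) (hpd : 0 ≤ pd) (hw : 0 < w)
    (D : Fin 4 → Fin 4 → ℝ)
    (hsym : ∀ x y, D x y = D y x) (hdiag : ∀ x, D x x = 0)
    (hab : D 0 1 = pa + pb) (hcd : D 2 3 = pc + pd)
    (hac : D 0 2 = pa + w + pc) (had : D 0 3 = pa + w + pd)
    (hbc : D 1 2 = pb + w + pc) (hbd : D 1 3 = pb + w + pd)
    (Q : Fin 4 → Fin 4 → ℝ)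
    (hQ : ∀ x y, Q x y = 2 * D x y - (∑ z, D x z) - (∑ z, D y z)) :
    Q 0 1 = Q 2 3 ∧
    ∀ x y : Fin 4, x ≠ y →
      ({x, y} : Finset (Fin 4)) ≠ {0, 1} → ({x, y} : Finset (Fin 4)) ≠ {2, 3} →
      Q 0 1 < Q x y :=
  stmt18_general pa pb pc pd w hw D hsym hdiag hab hcd hac had hbc hbd Q hQ
end
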